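/- Let M₁ and M₂ be nearly S*-invariant subspaces of H^2 with M₁ ∩ M₂ ≠ {0}. Then M₁ + M₂ is nearly S*-invariant, i.e., if f₁ ∈ M₁, f₂ ∈ M₂ and (f₁ + f₂)(0) = 0, then S*(f₁ + f₂) ∈ M₁ + M₂. -/

import Mathlib

/-!
A nonzero `g ∈ M₁ ⊓ M₂` is analytic on the disc, so it has a zero of finite order at `0`;
since `M₁ ⊓ M₂` is again nearly `S*`-invariant, dividing that zero out gives `h ∈ M₁ ⊓ M₂`
with `h 0 ≠ 0`. If `f₁ + f₂` vanishes at `0`, then with `c = f₁ 0 / h 0` the functions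
`f₁ - c • h ∈ M₁` and `f₂ + c • h ∈ M₂` both vanish at `0`, and `S*` is additive on
functions differentiable at `0`.
-/

open Complex MeasureTheory Metric Set ComplexConjugate

noncomputable section

/-- An "almost everywhere on the unit circle" statement, parametrized by angle. -/
def AECircle (P : ℝ → Prop) : Prop :=
  ∀ᵐ t ∂(MeasureTheory.volume.restrict (Set.Ioc (0:ℝ) (2 * Real.pi))), P t

/-- The `n`-th Fourier coefficient of the boundary values of `f`. -/
def fc (f : ℂ → ℂ) (n : ℤ) : ℂ :=
  (1 / (2 * Real.pi) : ℝ) •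
    ∫ t in (0:ℝ)..(2 * Real.pi),
      f (circleMap 0 1 t) * Complex.exp (-(n : ℂ) * (t : ℂ) * Complex.I)

/-- Square-integrability of the boundary values of `f` on the unit circle. -/
def MemL2 (f : ℂ → ℂ) : Prop :=
  Measurable (fun t : ℝ => f (circleMap 0 1 t)) ∧
    IntervalIntegrable (fun t => ‖f (circleMap 0 1 t)‖ ^ 2) MeasureTheory.volume 0 (2 * Real.pi)

/-- Essential boundedness of the boundary values of `f` on the unit circle. -/
def MemLinf (f : ℂ → ℂ) : Prop :=
  Measurable (fun t : ℝ => f (circleMap 0 1 t)) ∧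
    ∃ C : ℝ, AECircle fun t => ‖f (circleMap 0 1 t)‖ ≤ C

/-- Membership in the Hardy space `H²` of the unit disc: analytic on the disc,
square-integrable boundary values, vanishing negative Fourier coefficients, and
the Cauchy representation recovering interior values from boundary values. -/
def MemH2 (f : ℂ → ℂ) : Prop :=
  DifferentiableOn ℂ f (Metric.ball (0:ℂ) 1) ∧ MemL2 f ∧
    (∀ n : ℤ, n < 0 → fc f n = 0) ∧
    ∀ z ∈ Metric.ball (0:ℂ) 1,
      f z = (1 / (2 * Real.pi) : ℝ) •
        ∫ t in (0:ℝ)..(2 * Real.pi),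
          f (circleMap 0 1 t) * circleMap 0 1 t / (circleMap 0 1 t - z)

/-- `f` lies in the kernel of the Toeplitz operator `T_g` on `H²`:
`f ∈ H²` and the product `g·f` of boundary values has vanishing Fourier
coefficients of nonnegative index (i.e. `P_{H²}(g f) = 0`). -/
def MemKerT (g f : ℂ → ℂ) : Prop :=
  MemH2 f ∧ ∀ n : ℤ, 0 ≤ n → fc (fun z => g z * f z) n = 0

/-- `f` is an inner function: bounded analytic on the disc, with unimodular
boundary values almost everywhere on the circle. -/
def IsInner (f : ℂ → ℂ) : Prop :=
  DifferentiableOn ℂ f (Metric.ball (0:ℂ) 1) ∧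
    (∀ z ∈ Metric.ball (0:ℂ) 1, ‖f z‖ ≤ 1) ∧
    Measurable (fun t : ℝ => f (circleMap 0 1 t)) ∧
    AECircle fun t => ‖f (circleMap 0 1 t)‖ = 1

/-- `f` is an outer function: on the disc it has the standard exponential
representation via a real integrable function `k` on the circle. -/
def IsOuter (f : ℂ → ℂ) : Prop :=
  ∃ (α : ℂ) (k : ℝ → ℝ), ‖α‖ = 1 ∧
    IntervalIntegrable k MeasureTheory.volume 0 (2 * Real.pi) ∧
    ∀ z ∈ Metric.ball (0:ℂ) 1,
      f z = α * Complex.exp ((1 / (2 * Real.pi) : ℝ) •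
        ∫ t in (0:ℝ)..(2 * Real.pi),
          (circleMap 0 1 t + z) / (circleMap 0 1 t - z) * (k t : ℂ))

/-- Membership in `H^∞`: bounded analytic on the disc. -/
def MemHinf (f : ℂ → ℂ) : Prop :=
  DifferentiableOn ℂ f (Metric.ball (0:ℂ) 1) ∧
    ∃ C : ℝ, ∀ z ∈ Metric.ball (0:ℂ) 1, ‖f z‖ ≤ C

/-- `f` is invertible in `H^∞`. -/
def HinfInvertible (f : ℂ → ℂ) : Prop :=
  ∃ g : ℂ → ℂ, MemHinf g ∧ ∀ z ∈ Metric.ball (0:ℂ) 1, f z * g z = 1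

/-- `w` belongs to `𝒢H^∞`: it is invertible in `H^∞`, with control of
boundary values as well. -/
def MemGHinf (w : ℂ → ℂ) : Prop :=
  MemHinf w ∧ MemLinf w ∧
    ∃ w' : ℂ → ℂ, MemHinf w' ∧ MemLinf w' ∧
      (∀ z ∈ Metric.ball (0:ℂ) 1, w z * w' z = 1) ∧
      AECircle fun t => w (circleMap 0 1 t) * w' (circleMap 0 1 t) = 1

/-- The backward shift `S* f = (f - f 0)/z` (with the correct value `f'(0)` at `0`). -/
def bshift (f : ℂ → ℂ) : ℂ → ℂ :=
  fun z => if z = 0 then deriv f 0 else (f z - f 0) / z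

/-- Membership in the model space `K_θ = H² ⊖ θH² = ker T_{conj θ}`. -/
def MemModel (θ f : ℂ → ℂ) : Prop :=
  MemKerT (fun z => conj (θ z)) f

/-- The Toeplitz kernel `ker T_g` is trivial. -/
def KerTrivial (g : ℂ → ℂ) : Prop :=
  ∀ f, MemKerT g f → ∀ z ∈ Metric.ball (0:ℂ) 1, f z = 0

/-- The Toeplitz kernel `ker T_g` is nontrivial. -/
def KerNontrivial (g : ℂ → ℂ) : Prop :=
  ∃ f, MemKerT g f ∧ ∃ z ∈ Metric.ball (0:ℂ) 1, f z ≠ 0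

/-- `k` is a maximal vector for `ker T_g`: `k ∈ ker T_g` and `ker T_g` is the
minimal Toeplitz kernel containing `k`. -/
def MaximalVector (g k : ℂ → ℂ) : Prop :=
  MemKerT g k ∧
    ∀ h : ℂ → ℂ, MemLinf h → MemKerT h k →
      ∀ x, MemKerT g x → MemKerT h x

lemma bshift_eq_dslope (f : ℂ → ℂ) : bshift f = dslope f 0 := by
  funext z
  by_cases hz : z = 0
  · simp [bshift, hz]
  · simp [bshift, hz, dslope_of_ne, slope_def_field]

lemma bshift_add {f g : ℂ → ℂ} (hf : DifferentiableAt ℂ f 0) (hg : DifferentiableAt ℂ g 0) :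
    bshift (f + g) = bshift f + bshift g := by
  funext z
  by_cases hz : z = 0
  · simp only [bshift, if_pos hz, Pi.add_apply, deriv_add hf hg]
  · simp only [bshift, if_neg hz, Pi.add_apply]
    ring

lemma AnalyticAt.exists_iterate_dslope_apply_ne_zero {𝕜 E : Type*} [NontriviallyNormedField 𝕜]
    [NormedAddCommGroup E] [NormedSpace 𝕜 E] {f : 𝕜 → E} {z₀ : 𝕜} (hf : AnalyticAt 𝕜 f z₀)
    (hf_ne : ¬ ∀ᶠ z in nhds z₀, f z = 0) :
    ∃ n : ℕ, (Function.swap dslope z₀)^[n] f z₀ ≠ 0 := by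
  obtain ⟨p, hp⟩ := hf
  have hp_ne : p ≠ 0 := fun hp0 => hf_ne (hp.locally_zero_iff.mpr hp0)
  exact ⟨p.order, hp.iterate_dslope_fslope_ne_zero hp_ne⟩

def IsNearlyBShiftInvariant (M : Submodule ℂ (ℂ → ℂ)) : Prop :=
  ∀ f ∈ M, f 0 = 0 → bshift f ∈ M

namespace IsNearlyBShiftInvariant

variable {M M₁ M₂ : Submodule ℂ (ℂ → ℂ)}

lemma inf (h₁ : IsNearlyBShiftInvariant M₁) (h₂ : IsNearlyBShiftInvariant M₂) :
    IsNearlyBShiftInvariant (M₁ ⊓ M₂) :=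
  fun f hf hf0 => ⟨h₁ f hf.1 hf0, h₂ f hf.2 hf0⟩

lemma exists_mem_apply_zero_ne_zero (hM : IsNearlyBShiftInvariant M) {g : ℂ → ℂ}
    (hg : g ∈ M) {n : ℕ} (hn : (Function.swap dslope 0)^[n] g 0 ≠ 0) :
    ∃ h ∈ M, h 0 ≠ 0 := by
  induction n generalizing g with
  | zero => exact ⟨g, hg, hn⟩
  | succ n ih =>
    by_cases hg0 : g 0 = 0
    · refine ih (hM g hg hg0) ?_
      rwa [bshift_eq_dslope, ← Function.iterate_succ_apply]
    · exact ⟨g, hg, hg0⟩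

lemma sup (h₁ : IsNearlyBShiftInvariant M₁) (h₂ : IsNearlyBShiftInvariant M₂)
    (hd₁ : ∀ f ∈ M₁, DifferentiableAt ℂ f 0) (hd₂ : ∀ f ∈ M₂, DifferentiableAt ℂ f 0)
    {h : ℂ → ℂ} (hh : h ∈ M₁ ⊓ M₂) (hh0 : h 0 ≠ 0) :
    IsNearlyBShiftInvariant (M₁ ⊔ M₂) := by
  intro f hf hf0
  obtain ⟨f₁, hf₁, f₂, hf₂, rfl⟩ := Submodule.mem_sup.mp hf
  set c := f₁ 0 / h 0
  have hF₁ : f₁ - c • h ∈ M₁ := M₁.sub_mem hf₁ (M₁.smul_mem c hh.1)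
  have hF₂ : f₂ + c • h ∈ M₂ := M₂.add_mem hf₂ (M₂.smul_mem c hh.2)
  have hF₁0 : (f₁ - c • h) 0 = 0 := by
    simp only [Pi.sub_apply, Pi.smul_apply, smul_eq_mul, c, div_mul_cancel₀ _ hh0, sub_self]
  have hF₂0 : (f₂ + c • h) 0 = 0 := by
    simp only [Pi.add_apply, Pi.smul_apply, smul_eq_mul, c, div_mul_cancel₀ _ hh0]
    simpa [add_comm] using hf0
  have hsplit : f₁ + f₂ = (f₁ - c • h) + (f₂ + c • h) := by abel
  rw [hsplit, bshift_add (hd₁ _ hF₁) (hd₂ _ hF₂)]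
  exact Submodule.add_mem_sup (h₁ _ hF₁ hF₁0) (h₂ _ hF₂ hF₂0)

end IsNearlyBShiftInvariant

lemma MemH2.differentiableAt_zero {f : ℂ → ℂ} (hf : MemH2 f) : DifferentiableAt ℂ f 0 :=
  hf.1.differentiableAt (isOpen_ball.mem_nhds (mem_ball_self one_pos))

/-- the sum of two nearly `S*`-invariant subspaces of `H²` with
nontrivial intersection is nearly `S*`-invariant. -/
theorem sum_nearly_invariant (M₁ M₂ : Submodule ℂ (ℂ → ℂ))
    (h₁H2 : ∀ f ∈ M₁, MemH2 f) (h₂H2 : ∀ f ∈ M₂, MemH2 f)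
    (h₁ : ∀ f ∈ M₁, f 0 = 0 → bshift f ∈ M₁)
    (h₂ : ∀ f ∈ M₂, f 0 = 0 → bshift f ∈ M₂)
    (hne : ∃ g ∈ M₁ ⊓ M₂, ∃ z ∈ Metric.ball (0:ℂ) 1, g z ≠ 0) :
    ∀ f ∈ M₁ ⊔ M₂, f 0 = 0 → bshift f ∈ M₁ ⊔ M₂ := by
  obtain ⟨g, hg, z, hz, hgz⟩ := hne
  have hg_an : AnalyticOnNhd ℂ g (ball 0 1) := (h₁H2 g hg.1).1.analyticOnNhd isOpen_ball
  have hg_ne : ¬ ∀ᶠ w in nhds 0, g w = 0 := fun hg0 =>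
    hgz (hg_an.eqOn_zero_of_preconnected_of_eventuallyEq_zero (convex_ball 0 1).isPreconnected
      (mem_ball_self one_pos) hg0 hz)
  obtain ⟨n, hn⟩ := (hg_an 0 (mem_ball_self one_pos)).exists_iterate_dslope_apply_ne_zero hg_ne
  obtain ⟨h, hh, hh0⟩ := (IsNearlyBShiftInvariant.inf h₁ h₂).exists_mem_apply_zero_ne_zero hg hn
  exact IsNearlyBShiftInvariant.sup h₁ h₂ (fun f hf => (h₁H2 f hf).differentiableAt_zero)
    (fun f hf => (h₂H2 f hf).differentiableAt_zero) hh hh0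

end
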